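/- arXiv:2010.10736 — 2 statements merged into one kernel-verified Lean document; each statement's English description precedes it below -/
import Mathlib

section
/- Let F be a convex subset of a Hausdorff locally convex topological vector space X with 0 ∈ int(F), and let Ω be a nonempty convex subset of X. For x̄ ∈ cl_F(Ω), the convex subdifferential of T_Ω^F at x̄ equals N(x̄; cl_F(Ω)) ∩ C*, where C* := {x* ∈ X* | σ_F(−x*) ≤ 1}. -/
/-! At a point `x₀` of `cl_F(Ω)` the minimal time vanishes, as it does on all of `cl_F(Ω)`;
hence a subgradient at `x₀` is normal to `cl_F(Ω)`, and testing it at `x₀ - f` with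
`T(x₀ - f) ≤ 1` (convexity of `F`) gives `-p f ≤ 1`. Conversely, if `x + t • f ∈ Ω` then
`x + t • f ∈ cl_F(Ω)`, so normality gives `p (x - x₀) ≤ -t p f ≤ t`; the infimum over such
`t` is the subgradient inequality. -/

open Set Filter Topology Pointwise

variable {X : Type*} [AddCommGroup X] [Module ℝ X] [TopologicalSpace X]
  [IsTopologicalAddGroup X] [ContinuousSMul ℝ X] [T2Space X] [LocallyConvexSpace ℝ X]

/-- The set of admissible times in the definition of the minimal time function. -/
def timeSet (F Ω : Set X) (x : X) : Set ℝ := {t : ℝ | 0 < t ∧ ∃ f ∈ F, x + t • f ∈ Ω}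

/-- The minimal time function with target Ω and constant dynamics F. -/
noncomputable def minTime (F Ω : Set X) (x : X) : ℝ := sInf (timeSet F Ω x)

/-- The convex subdifferential of the minimal time function at a point. -/
def subdiffMinTime (F Ω : Set X) (x₀ : X) : Set (X →L[ℝ] ℝ) :=
  {p : X →L[ℝ] ℝ | ∀ x : X, p (x - x₀) ≤ minTime F Ω x - minTime F Ω x₀}

/-- The normal cone to a set A at x₀. -/
def normalCone (A : Set X) (x₀ : X) : Set (X →L[ℝ] ℝ) :=
  {p : X →L[ℝ] ℝ | ∀ x ∈ A, p (x - x₀) ≤ 0}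

section MinTime

variable {E : Type*} [AddCommGroup E] [Module ℝ E]

/-- The `F`-closure `cl_F(Ω) = ⋂_{ε>0} (Ω - ε • F)`, written out pointwise. -/
def fClosure (F Ω : Set E) : Set E := {y : E | ∀ ε : ℝ, 0 < ε → ∃ ω ∈ Ω, ∃ f ∈ F, y = ω - ε • f}

lemma subset_fClosure {F : Set E} (h0 : (0 : E) ∈ F) (Ω : Set E) : Ω ⊆ fClosure F Ω :=
  fun y hy _ _ => ⟨y, hy, 0, h0, by simp⟩

lemma Set.Nonempty.of_fClosure {F Ω : Set E} (h : (fClosure F Ω).Nonempty) : Ω.Nonempty := by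
  obtain ⟨y, hy⟩ := h
  obtain ⟨ω, hω, -⟩ := hy 1 one_pos
  exact ⟨ω, hω⟩

lemma minTime_nonneg (F Ω : Set E) (x : E) : 0 ≤ minTime F Ω x :=
  Real.sInf_nonneg fun _ ht => ht.1.le

lemma minTime_le_of_mem_timeSet {F Ω : Set E} {x : E} {t : ℝ} (ht : t ∈ timeSet F Ω x) :
    minTime F Ω x ≤ t :=
  csInf_le ⟨0, fun _ hs => hs.1.le⟩ ht

lemma timeSet_nonempty {F Ω : Set E} (hF : Absorbent ℝ F) (hΩ : Ω.Nonempty) (x : E) :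
    (timeSet F Ω x).Nonempty := by
  obtain ⟨ω, hω⟩ := hΩ
  obtain ⟨t, ht, f, hf, htf⟩ := hF.gauge_set_nonempty (x := ω - x)
  exact ⟨t, ht, f, hf, by simpa [htf]⟩

lemma minTime_eq_zero_of_mem_fClosure {F Ω : Set E} {y : E} (hy : y ∈ fClosure F Ω) :
    minTime F Ω y = 0 := by
  refine le_antisymm (le_of_forall_pos_le_add fun ε hε => ?_) (minTime_nonneg F Ω y)
  obtain ⟨ω, hω, f, hf, rfl⟩ := hy ε hε
  simpa using minTime_le_of_mem_timeSet (t := ε) ⟨hε, f, hf, by simpa using hω⟩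

lemma add_mem_timeSet_sub_smul {F Ω : Set E} (hF : Convex ℝ F) {x f : E} {r t : ℝ}
    (hr : 0 ≤ r) (hf : f ∈ F) (ht : t ∈ timeSet F Ω x) : r + t ∈ timeSet F Ω (x - r • f) := by
  obtain ⟨htpos, f', hf', hx⟩ := ht
  have hcomb : r • f + t • f' ∈ (r + t) • F := by
    rw [hF.add_smul hr htpos.le]
    exact add_mem_add (smul_mem_smul_set hf) (smul_mem_smul_set hf')
  obtain ⟨g, hg, hgf : (r + t) • g = r • f + t • f'⟩ := hcomb
  refine ⟨by linarith, g, hg, ?_⟩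
  rw [hgf, show x - r • f + (r • f + t • f') = x + t • f' by abel]
  exact hx

lemma minTime_sub_smul_le {F Ω : Set E} (hF : Convex ℝ F) {x f : E} {r : ℝ} (hr : 0 ≤ r)
    (hf : f ∈ F) (hx : (timeSet F Ω x).Nonempty) :
    minTime F Ω (x - r • f) ≤ r + minTime F Ω x := by
  rw [← sub_le_iff_le_add']
  exact le_csInf hx fun t ht =>
    sub_le_iff_le_add'.mpr (minTime_le_of_mem_timeSet (add_mem_timeSet_sub_smul hF hr hf ht))

variable [TopologicalSpace E]

lemma apply_sub_le_minTime {F Ω : Set E} (h0 : (0 : E) ∈ F) {x₀ x : E}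
    (hx : (timeSet F Ω x).Nonempty) {p : E →L[ℝ] ℝ} (hN : p ∈ normalCone (fClosure F Ω) x₀)
    (hC : ∀ f ∈ F, -(p f) ≤ 1) : p (x - x₀) ≤ minTime F Ω x := by
  refine le_csInf hx ?_
  rintro t ⟨ht, f, hf, hxf⟩
  have hnormal : p (x + t • f - x₀) ≤ 0 := hN _ (subset_fClosure h0 Ω hxf)
  have hsplit : p (x + t • f - x₀) = p (x - x₀) + t * p f := by
    rw [show x + t • f - x₀ = (x - x₀) + t • f by abel, map_add, map_smul, smul_eq_mul]
  have hdual : t * -(p f) ≤ t * 1 := mul_le_mul_of_nonneg_left (hC f hf) ht.le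
  linarith

end MinTime

theorem subdiff_minTime_at_clF_general (F Ω : Set X) (hconv : Convex ℝ F)
    (h0 : (0 : X) ∈ interior F) (x₀ : X)
    (hx₀ : x₀ ∈ {y : X | ∀ ε : ℝ, 0 < ε → ∃ ω ∈ Ω, ∃ f ∈ F, y = ω - ε • f}) :
    subdiffMinTime F Ω x₀ =
      normalCone {y : X | ∀ ε : ℝ, 0 < ε → ∃ ω ∈ Ω, ∃ f ∈ F, y = ω - ε • f} x₀ ∩
        {p : X →L[ℝ] ℝ | ∀ f ∈ F, -(p f) ≤ 1} := by
  change x₀ ∈ fClosure F Ω at hx₀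
  have hreach : ∀ x, (timeSet F Ω x).Nonempty :=
    timeSet_nonempty (absorbent_nhds_zero (mem_interior_iff_mem_nhds.mp h0))
      (Set.Nonempty.of_fClosure ⟨x₀, hx₀⟩)
  have hT₀ : minTime F Ω x₀ = 0 := minTime_eq_zero_of_mem_fClosure hx₀
  ext p
  constructor
  · intro hp
    refine ⟨fun y hy => ?_, fun f hf => ?_⟩
    · simpa [hT₀, minTime_eq_zero_of_mem_fClosure hy] using hp y
    · have hstep := minTime_sub_smul_le (r := 1) hconv zero_le_one hf (hreach x₀)
      have hsub := hp (x₀ - (1 : ℝ) • f)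
      simp only [one_smul, sub_sub_cancel_left, map_neg] at hstep hsub
      linarith
  · rintro ⟨hN, hC⟩ x
    rw [hT₀, sub_zero]
    exact apply_sub_le_minTime (interior_subset h0) (hreach x) hN hC

/-- Subdifferential of the minimal time function at points of the F-closure of the target:
∂T_Ω^F(x̄) = N(x̄; cl_F(Ω)) ∩ C*. -/
theorem subdiff_minTime_at_clF (F Ω : Set X) (hconv : Convex ℝ F)
    (h0 : (0 : X) ∈ interior F) (hΩne : Ω.Nonempty) (hΩ : Convex ℝ Ω) (x₀ : X)
    (hx₀ : x₀ ∈ {y : X | ∀ ε : ℝ, 0 < ε → ∃ ω ∈ Ω, ∃ f ∈ F, y = ω - ε • f}) :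
    subdiffMinTime F Ω x₀ =
      normalCone {y : X | ∀ ε : ℝ, 0 < ε → ∃ ω ∈ Ω, ∃ f ∈ F, y = ω - ε • f} x₀ ∩
        {p : X →L[ℝ] ℝ | ∀ f ∈ F, -(p f) ≤ 1} :=
  subdiff_minTime_at_clF_general F Ω hconv h0 x₀ hx₀
end

section
/- Let F be a convex subset of a Hausdorff locally convex topological vector space X, and let Ω be nonempty. Fix r > 0 and define the expansion Ω_r := {x | T_Ω^F(x) ≤ r}. If x ∉ Ω_r and T_Ω^F(x) < ∞, then T_Ω^F(x) = T_{Ω_r}^F(x) + r. -/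
/-! Moving for time `t` along `f ∈ F` and then for time `s` along `g ∈ F` is, by convexity of `F`,
a single motion for time `t + s` along a convex combination of `f` and `g`. This gives the
sub-optimality principle `T(x) ≤ t + T(x + t • f)`, hence `T_Ω(x) ≤ T_{Ω_r}(x) + r`. Conversely,
since `T_Ω(x) > r`, every admissible time `t` for `Ω` exceeds `r`, and stopping the same motion
at time `t - r` lands in `Ω_r`. -/

open Set Filter Topology Pointwise

variable {X : Type*} [AddCommGroup X] [Module ℝ X] [TopologicalSpace X]
  [IsTopologicalAddGroup X] [ContinuousSMul ℝ X] [T2Space X] [LocallyConvexSpace ℝ X]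

/-- The extended-real-valued minimal time function with target Ω and dynamics F;
its value is +∞ when no admissible time exists. -/
noncomputable def minTimeE (F Ω : Set X) (x : X) : EReal :=
  sInf (Set.image (fun t : ℝ => (t : EReal)) (timeSet F Ω x))

section MinTime

variable {E : Type*} [AddCommGroup E] [Module ℝ E] {F Ω : Set E} {x f : E} {r t : ℝ}

lemma minTimeE_le_of_mem (ht : t ∈ timeSet F Ω x) : minTimeE F Ω x ≤ t :=
  sInf_le ⟨t, ht, rfl⟩

lemma le_minTimeE_iff {c : EReal} : c ≤ minTimeE F Ω x ↔ ∀ t ∈ timeSet F Ω x, c ≤ t := by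
  simp only [minTimeE, le_sInf_iff, forall_mem_image]

lemma add_mem_timeSet (hconv : Convex ℝ F) (hf : f ∈ F) (ht : 0 < t) {s : ℝ}
    (hs : s ∈ timeSet F Ω (x + t • f)) : t + s ∈ timeSet F Ω x := by
  obtain ⟨hs, g, hg, hsg⟩ := hs
  have hts : 0 < t + s := add_pos ht hs
  refine ⟨hts, (t / (t + s)) • f + (s / (t + s)) • g,
    hconv hf hg (div_nonneg ht.le hts.le) (div_nonneg hs.le hts.le) (by field_simp), ?_⟩
  rwa [smul_add, smul_smul, smul_smul, mul_div_cancel₀ _ hts.ne', mul_div_cancel₀ _ hts.ne',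
    ← add_assoc]

lemma minTimeE_le_add (hconv : Convex ℝ F) (hf : f ∈ F) (ht : 0 < t) :
    minTimeE F Ω x ≤ t + minTimeE F Ω (x + t • f) := by
  rw [add_comm, ← EReal.sub_le_iff_le_add (by simp) (by simp), le_minTimeE_iff]
  intro s hs
  rw [EReal.sub_le_iff_le_add (by simp) (by simp), add_comm, ← EReal.coe_add]
  exact minTimeE_le_of_mem (add_mem_timeSet hconv hf ht hs)

lemma sub_mem_timeSet_expansion (hr : 0 < r) (hrt : r < t) (hf : f ∈ F) (htf : x + t • f ∈ Ω) :
    t - r ∈ timeSet F {y : E | minTimeE F Ω y ≤ r} x := by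
  refine ⟨sub_pos.mpr hrt, f, hf, minTimeE_le_of_mem ⟨hr, f, hf, ?_⟩⟩
  rwa [add_assoc, ← add_smul, sub_add_cancel]

end MinTime

theorem minTime_expansion_general (F Ω : Set X) (hconv : Convex ℝ F)
    (r : ℝ) (hr : 0 < r) (x : X)
    (hx : x ∉ {y : X | minTimeE F Ω y ≤ (r : EReal)}) :
    minTimeE F Ω x = minTimeE F {y : X | minTimeE F Ω y ≤ (r : EReal)} x + (r : EReal) := by
  have hrx : (r : EReal) < minTimeE F Ω x := lt_of_not_ge hx
  apply le_antisymm
  · rw [← EReal.sub_le_iff_le_add (by simp) (by simp), le_minTimeE_iff]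
    rintro s ⟨hs, f, hf, hsf⟩
    rw [EReal.sub_le_iff_le_add (by simp) (by simp)]
    calc minTimeE F Ω x ≤ s + minTimeE F Ω (x + s • f) := minTimeE_le_add hconv hf hs
      _ ≤ s + r := add_le_add_right hsf _
  · rw [le_minTimeE_iff]
    rintro t ⟨ht, f, hf, htf⟩
    have hrt : r < t := by
      exact_mod_cast hrx.trans_le (minTimeE_le_of_mem ⟨ht, f, hf, htf⟩)
    calc _ ≤ ((t - r : ℝ) : EReal) + r :=
          add_le_add_left (minTimeE_le_of_mem (sub_mem_timeSet_expansion hr hrt hf htf)) _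
      _ = t := by rw [← EReal.coe_add, sub_add_cancel]

/-- For r > 0 and x outside the expansion Ω_r with T_Ω^F(x) finite, one has
T_Ω^F(x) = T_{Ω_r}^F(x) + r. -/
theorem minTime_expansion (F Ω : Set X) (hconv : Convex ℝ F) (hΩ : Ω.Nonempty)
    (r : ℝ) (hr : 0 < r) (x : X)
    (hx : x ∉ {y : X | minTimeE F Ω y ≤ (r : EReal)})
    (hfin : minTimeE F Ω x < ⊤) :
    minTimeE F Ω x = minTimeE F {y : X | minTimeE F Ω y ≤ (r : EReal)} x + (r : EReal) :=
  minTime_expansion_general F Ω hconv r hr x hx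
end
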